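/- Let A be a pca with a partial numbering γ : ω ⇀ A, and let X = {⟨n,m,k⟩ : n,m,k ∈ dom(γ) and γ(n)·γ(m) is defined and equals γ(k)}. Then A embeds (as a pca) into G^X, and hence into Scott's graph model G. -/

import Mathlib

namespace PCAEmb

/-! ### Oracle computability -/

/-- Codes for partial functions computable relative to an oracle. -/
inductive OCode : Type
  | zero : OCode
  | succ : OCode
  | left : OCode
  | right : OCode
  | oracle : OCode
  | pair : OCode → OCode → OCode
  | comp : OCode → OCode → OCode
  | prec : OCode → OCode → OCode
  | rfind' : OCode → OCode

/-- Evaluation of an oracle code, relative to a (partial) oracle `O`. -/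
def evalo (O : ℕ →. ℕ) : OCode → ℕ →. ℕ
  | .zero => pure 0
  | .succ => Nat.succ
  | .left => ↑fun n : ℕ => n.unpair.1
  | .right => ↑fun n : ℕ => n.unpair.2
  | .oracle => O
  | .pair cf cg => fun n => Nat.pair <$> evalo O cf n <*> evalo O cg n
  | .comp cf cg => fun n => evalo O cg n >>= evalo O cf
  | .prec cf cg =>
      Nat.unpaired fun a n =>
        n.rec (evalo O cf a) fun y IH => do
          let i ← IH
          evalo O cg (Nat.pair a (Nat.pair y i))
  | .rfind' cf =>
      Nat.unpaired fun a m =>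
        (Nat.rfind fun n => (fun x => x = 0) <$> evalo O cf (Nat.pair a (n + m))).map (· + m)

/-- The standard numbering of oracle codes. -/
def OCode.ofNat : ℕ → OCode
  | 0 => .zero
  | 1 => .succ
  | 2 => .left
  | 3 => .right
  | 4 => .oracle
  | n + 5 =>
    match n % 4 with
    | 0 => .pair (OCode.ofNat (n / 4).unpair.1) (OCode.ofNat (n / 4).unpair.2)
    | 1 => .comp (OCode.ofNat (n / 4).unpair.1) (OCode.ofNat (n / 4).unpair.2)
    | 2 => .prec (OCode.ofNat (n / 4).unpair.1) (OCode.ofNat (n / 4).unpair.2)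
    | _ => .rfind' (OCode.ofNat (n / 4).unpair.1)
  decreasing_by
    all_goals
      have h1 := Nat.unpair_left_le (n / 4)
      have h2 := Nat.unpair_right_le (n / 4)
      have h3 := Nat.div_le_self n 4
      omega

/-- The `e`-th Turing functional with oracle `O` : `Φ_e^O`. -/
def phi (O : ℕ →. ℕ) (e : ℕ) : ℕ →. ℕ := evalo O (OCode.ofNat e)

/-- The characteristic function of a set of naturals, as a (total) partial function. -/
noncomputable def chi (X : Set ℕ) : ℕ →. ℕ :=
  fun n => Part.some (X.indicator (fun _ => 1) n)

/-- `ψ` is partial computable relative to the oracle `O`. -/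
def RecursiveIn (O : ℕ →. ℕ) (ψ : ℕ →. ℕ) : Prop := ∃ c : OCode, evalo O c = ψ

/-- Turing reducibility of sets of naturals. -/
def TuringLE (X Y : Set ℕ) : Prop := RecursiveIn (chi Y) (chi X)

/-- A total function `d : ℕ → ℕ` is `Y`-computable. -/
def ComputableIn (Y : Set ℕ) (d : ℕ → ℕ) : Prop :=
  RecursiveIn (chi Y) (fun n => Part.some (d n))

/-- A binary relation on `ℕ` is `Y`-c.e. -/
def CEIn (Y : Set ℕ) (R : ℕ → ℕ → Prop) : Prop :=
  ∃ c : OCode, ∀ n m, R n m ↔ (evalo (chi Y) c (Nat.pair n m)).Dom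

/-- A set `W ⊆ ℕ` is `Y`-c.e. -/
def CE1In (Y : Set ℕ) (W : Set ℕ) : Prop :=
  ∃ c : OCode, ∀ n, n ∈ W ↔ (evalo (chi Y) c n).Dom

/-- The canonical finite set `D_u` with code `u` (binary coding). -/
def Du (u : ℕ) : Set ℕ := {k | u.testBit k}

/-- Enumeration reducibility: `Z ≤ₑ Y`. -/
def EnumLE (Z Y : Set ℕ) : Prop :=
  ∃ W : Set ℕ, CE1In ∅ W ∧ ∀ x, x ∈ Z ↔ ∃ u, Nat.pair x u ∈ W ∧ Du u ⊆ Y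

/-- The Turing jump `X'` of a set `X`. -/
def jump (X : Set ℕ) : Set ℕ := {e | (phi (chi X) e e).Dom}

/-- The halting set `K = {e : φ_e(e)↓}`. -/
def Khalt : Set ℕ := jump ∅

/-! ### Partial combinatory algebras -/

/-- `k·a·b` as a partial element. -/
def app2 {α : Type*} (app : α → α → Part α) (a b c : α) : Part α :=
  (app a b).bind fun x => app x c

/-- `s·a·b·c` as a partial element. -/
def app3 {α : Type*} (app : α → α → Part α) (a b c d : α) : Part α :=
  (app2 app a b c).bind fun x => app x d

/-- A partial applicative structure is a pca if it has (distinct) combinators `s` and `k`. -/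
def IsPCA {α : Type*} (app : α → α → Part α) : Prop :=
  ∃ s k : α, s ≠ k ∧
    (∀ a b : α, app2 app k a b = Part.some a) ∧
    (∀ a b : α, (app2 app s a b).Dom) ∧
    (∀ a b c : α,
      app3 app s a b c = (app a c).bind fun x => (app b c).bind fun y => app x y)

/-- An embedding of partial combinatory algebras: an injection that preserves
(defined) application. -/
def IsPCAEmbedding {α β : Type*} (appA : α → α → Part α) (appB : β → β → Part β)
    (f : α → β) : Prop :=
  Function.Injective f ∧ ∀ a a' c : α, c ∈ appA a a' → f c ∈ appB (f a) (f a')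

/-! ### Partial numberings -/

/-- `γ : ℕ ⇀ α` is a partial numbering (i.e. surjective). -/
def IsNumbering {α : Type*} (γ : ℕ →. α) : Prop := ∀ a : α, ∃ n, a ∈ γ n

/-- `d` is an `(a⊥, a⊤)`-decider for `X` with respect to `γ`. -/
def IsDecider {α : Type*} (γ : ℕ →. α) (abot atop : α) (X : Set ℕ) (d : ℕ → ℕ) : Prop :=
  ∀ n, (n ∉ X → γ (d n) = Part.some abot) ∧ (n ∈ X → γ (d n) = Part.some atop)

/-- `γ` has `Y`-c.e. inequivalence. -/
def CEInequiv {α : Type*} (Y : Set ℕ) (γ : ℕ →. α) : Prop :=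
  ∃ R : ℕ → ℕ → Prop, CEIn Y R ∧
    ∀ n m, (γ n).Dom → (γ m).Dom → (R n m ↔ γ n ≠ γ m)

/-- `γ` is a `Y`-effectively pca-valued partial numbering: the application is
represented on codes by a partial `Y`-computable function `ψ`. -/
def EffValued {α : Type*} (Y : Set ℕ) (app : α → α → Part α) (γ : ℕ →. α) : Prop :=
  ∃ ψ : ℕ →. ℕ, RecursiveIn (chi Y) ψ ∧
    ∀ (n m : ℕ) (a b c : α), a ∈ γ n → b ∈ γ m → c ∈ app a b →
      ∃ j, j ∈ ψ (Nat.pair n m) ∧ c ∈ γ j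

/-- `γ` is a strongly `Y`-effectively pca-valued partial numbering. -/
def StrongEffValued {α : Type*} (Y : Set ℕ) (app : α → α → Part α) (γ : ℕ →. α) : Prop :=
  ∃ ψ : ℕ →. ℕ, RecursiveIn (chi Y) ψ ∧
    (∀ (n m : ℕ) (a b c : α), a ∈ γ n → b ∈ γ m → c ∈ app a b →
      ∃ j, j ∈ ψ (Nat.pair n m) ∧ c ∈ γ j) ∧
    (∀ (n m k l : ℕ) (a b a' b' c : α), a ∈ γ n → b ∈ γ m → a' ∈ γ k → b' ∈ γ l →
      c ∈ app a b → c ∈ app a' b' → ψ (Nat.pair n m) = ψ (Nat.pair k l))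

/-! ### The models -/

/-- Kleene's first model relativized to `X`: application `n · m = Φ_n^X(m)`. -/
noncomputable def k1App (X : Set ℕ) : ℕ → ℕ → Part ℕ := fun n m => phi (chi X) n m

/-- A total function as a partial function. -/
def toPFun (g : ℕ → ℕ) : ℕ →. ℕ := fun n => Part.some (g n)

/-- Join `f ⊕ g` of two partial functions. -/
def pjoin (f g : ℕ →. ℕ) : ℕ →. ℕ := fun n =>
  if n % 2 = 0 then f (n / 2) else g (n / 2)

/-- The totalization of a partial function, as a partial element of `ℕ → ℕ`:
defined iff `ψ` is total. -/
def partToTotal (ψ : ℕ →. ℕ) : Part (ℕ → ℕ) :=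
  ⟨∀ n, (ψ n).Dom, fun H n => (ψ n).get (H n)⟩

/-- Application in Kleene's second model `K₂`: `g · h = Φ^{g⊕h}_{g 0}`,
defined iff this function is total. -/
def k2App (g h : ℕ → ℕ) : Part (ℕ → ℕ) :=
  partToTotal (phi (pjoin (toPFun g) (toPFun h)) (g 0))

/-- Application in van Oosten's sequential model `B`: `θ · ρ = Φ^{θ⊕ρ}_{θ 0}`
(always defined, as a partial function). -/
def bApp (θ ρ : ℕ →. ℕ) : Part (ℕ →. ℕ) :=
  Part.some (fun n => (θ 0).bind fun e => phi (pjoin θ ρ) e n)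

/-- Restriction of a partial applicative structure to a subset. -/
def subApp {α : Type*} (app : α → α → Part α) (P : α → Prop)
    (a b : Subtype P) : Part (Subtype P) :=
  (app a.1 b.1).bind fun c => Part.assert (P c) fun h => Part.some ⟨c, h⟩

/-- Carrier of `K₂^X` : the total `X`-computable functions. -/
def K2el (X : Set ℕ) : Type := {g : ℕ → ℕ // RecursiveIn (chi X) (toPFun g)}

/-- Application in `K₂^X`. -/
def k2XApp (X : Set ℕ) : K2el X → K2el X → Part (K2el X) :=
  subApp k2App _

/-- Carrier of `B^X` : the partial `X`-computable functions. -/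
def Bel (X : Set ℕ) : Type := {θ : ℕ →. ℕ // RecursiveIn (chi X) θ}

/-- Application in `B^X`. -/
def bXApp (X : Set ℕ) : Bel X → Bel X → Part (Bel X) :=
  subApp bApp _

/-- Application in Scott's graph model `G`. -/
def gApp (A B : Set ℕ) : Part (Set ℕ) :=
  Part.some {n | ∃ u, Nat.pair n u ∈ A ∧ Du u ⊆ B}

/-- Carrier of `G^Z` : the sets enumeration-reducible to `Z`. -/
def Gel (Z : Set ℕ) : Type := {A : Set ℕ // EnumLE A Z}

/-- Application in `G^Z`. -/
def gXApp (Z : Set ℕ) : Gel Z → Gel Z → Part (Gel Z) :=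
  subApp gApp _

/-- `X ⊕ X̄ = {2n : n ∈ X} ∪ {2n+1 : n ∉ X}`. -/
def joinCompl (X : Set ℕ) : Set ℕ :=
  {k | ∃ n, (k = 2 * n ∧ n ∈ X) ∨ (k = 2 * n + 1 ∧ n ∉ X)}

/-! ### The λ-calculus -/

/-- Untyped λ-terms (de Bruijn representation). -/
inductive Lam : Type
  | var : ℕ → Lam
  | app : Lam → Lam → Lam
  | abs : Lam → Lam

/-- Lift (shift up) the free variables `≥ d` of a term. -/
def Lam.lift : Lam → ℕ → Lam
  | .var n, d => if n < d then .var n else .var (n + 1)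
  | .app M N, d => .app (M.lift d) (N.lift d)
  | .abs M, d => .abs (M.lift (d + 1))

/-- Substitution `M[k := N]` (de Bruijn). -/
def Lam.subst : Lam → ℕ → Lam → Lam
  | .var n, k, N => if n = k then N else if k < n then .var (n - 1) else .var n
  | .app M M', k, N => .app (M.subst k N) (M'.subst k N)
  | .abs M, k, N => .abs (M.subst (k + 1) (N.lift 0))

/-- β-equivalence of λ-terms. -/
inductive BetaEq : Lam → Lam → Prop
  | beta (M N : Lam) : BetaEq (.app (.abs M) N) (M.subst 0 N)
  | refl (M : Lam) : BetaEq M M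
  | symm {M N : Lam} : BetaEq M N → BetaEq N M
  | trans {M N P : Lam} : BetaEq M N → BetaEq N P → BetaEq M P
  | appCongr {M M' N N' : Lam} :
      BetaEq M M' → BetaEq N N' → BetaEq (.app M N) (.app M' N')
  | absCongr {M M' : Lam} : BetaEq M M' → BetaEq (.abs M) (.abs M')

/-- βη-equivalence of λ-terms. -/
inductive BetaEtaEq : Lam → Lam → Prop
  | beta (M N : Lam) : BetaEtaEq (.app (.abs M) N) (M.subst 0 N)
  | eta (M : Lam) : BetaEtaEq (.abs (.app (M.lift 0) (.var 0))) M
  | refl (M : Lam) : BetaEtaEq M M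
  | symm {M N : Lam} : BetaEtaEq M N → BetaEtaEq N M
  | trans {M N P : Lam} : BetaEtaEq M N → BetaEtaEq N P → BetaEtaEq M P
  | appCongr {M M' N N' : Lam} :
      BetaEtaEq M M' → BetaEtaEq N N' → BetaEtaEq (.app M N) (.app M' N')
  | absCongr {M M' : Lam} : BetaEtaEq M M' → BetaEtaEq (.abs M) (.abs M')

def lamBetaSetoid : Setoid Lam := ⟨BetaEq, ⟨BetaEq.refl, BetaEq.symm, BetaEq.trans⟩⟩

def lamBetaEtaSetoid : Setoid Lam :=
  ⟨BetaEtaEq, ⟨BetaEtaEq.refl, BetaEtaEq.symm, BetaEtaEq.trans⟩⟩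

/-- The pca `λ` of λ-terms modulo β-equivalence. -/
def LamBeta : Type := Quotient lamBetaSetoid

/-- The pca `λη` of λ-terms modulo βη-equivalence. -/
def LamBetaEta : Type := Quotient lamBetaEtaSetoid

/-- Application in `λ` (total). -/
def lamBetaApp : LamBeta → LamBeta → Part LamBeta := fun a b =>
  Part.some (Quotient.map₂ Lam.app (fun _ _ h1 _ _ h2 => BetaEq.appCongr h1 h2) a b)

/-- Application in `λη` (total). -/
def lamBetaEtaApp : LamBetaEta → LamBetaEta → Part LamBetaEta := fun a b =>
  Part.some (Quotient.map₂ Lam.app (fun _ _ h1 _ _ h2 => BetaEtaEq.appCongr h1 h2) a b)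


/-! ### Auxiliary development for `stmt16` -/

/-- Translation of Mathlib partial recursive codes into `OCode`s. -/
def ofCode : Nat.Partrec.Code → OCode
  | .zero => .zero
  | .succ => .succ
  | .left => .left
  | .right => .right
  | .pair cf cg => .pair (ofCode cf) (ofCode cg)
  | .comp cf cg => .comp (ofCode cf) (ofCode cg)
  | .prec cf cg => .prec (ofCode cf) (ofCode cg)
  | .rfind' cf => .rfind' (ofCode cf)

theorem evalo_ofCode (O : ℕ →. ℕ) : ∀ c : Nat.Partrec.Code, evalo O (ofCode c) = c.eval
  | .zero => rfl
  | .succ => rfl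
  | .left => rfl
  | .right => rfl
  | .pair cf cg => by
      simp [ofCode, evalo, Nat.Partrec.Code.eval, evalo_ofCode O cf, evalo_ofCode O cg]; rfl
  | .comp cf cg => by
      simp [ofCode, evalo, Nat.Partrec.Code.eval, evalo_ofCode O cf, evalo_ofCode O cg]; rfl
  | .prec cf cg => by
      simp [ofCode, evalo, Nat.Partrec.Code.eval, evalo_ofCode O cf, evalo_ofCode O cg]; rfl
  | .rfind' cf => by
      simp [ofCode, evalo, Nat.Partrec.Code.eval, evalo_ofCode O cf]; rfl

theorem ce1in_of_partrec {W : Set ℕ} {f : ℕ →. ℕ} (hf : Nat.Partrec f)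
    (h : ∀ n, n ∈ W ↔ (f n).Dom) : CE1In ∅ W := by
  obtain ⟨c, hc⟩ := Nat.Partrec.Code.exists_code.1 hf
  exact ⟨ofCode c, fun n => by rw [evalo_ofCode, hc]; exact h n⟩

theorem ce1in_exists {g : ℕ → ℕ → Bool} (hg : Computable₂ g) :
    CE1In ∅ {z | ∃ cL, g z cL = true} := by
  have hp : Partrec fun z => Nat.rfind ((g z : ℕ →. Bool)) := Partrec.rfind hg.partrec₂
  refine ce1in_of_partrec (Partrec.nat_iff.1 hp) fun n => ?_
  rw [Nat.rfind_dom]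
  constructor
  · rintro ⟨cL, hcL⟩
    exact ⟨cL, Part.mem_some_iff.2 hcL.symm, fun {m} _ => trivial⟩
  · rintro ⟨m, hm, -⟩
    exact ⟨m, (Part.mem_some_iff.1 hm).symm⟩

/-- The tag number of the code `m`. -/
def marker (m : ℕ) : ℕ := Nat.pair 0 (2 ^ (m + 1) + 1)

/-- Encoding of triples. -/
def tri (n m k : ℕ) : ℕ := Nat.pair n (Nat.pair m k)

theorem marker_pos (m : ℕ) : 1 ≤ marker m :=
  le_trans (Nat.succ_le_succ (Nat.zero_le _)) (Nat.right_le_pair 0 _)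

theorem two_pow_ne_odd {a b : ℕ} (ha : 1 ≤ a) : 2 ^ a ≠ 2 ^ (b + 1) + 1 := by
  have h2 : 2 ∣ 2 ^ a := dvd_pow_self 2 (by omega)
  have h3 : 2 ∣ 2 ^ (b + 1) := dvd_pow_self 2 (by omega)
  omega

theorem marker_injective : Function.Injective marker := by
  intro a b h
  have h2 := (Nat.pair_eq_pair.1 h).2
  have h3 : 2 ^ (a + 1) = 2 ^ (b + 1) := by omega
  have := Nat.pow_right_injective (le_refl 2) h3
  omega

theorem Du_two_pow (M : ℕ) : Du (2 ^ M) = {M} := by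
  ext t
  simp [Du, Nat.testBit_two_pow, eq_comm]

theorem zero_mem_Du_odd (m : ℕ) : (0 : ℕ) ∈ Du (2 ^ (m + 1) + 1) := by
  have h3 : 2 ∣ 2 ^ (m + 1) := dvd_pow_self 2 (by omega)
  simp only [Du, Set.mem_setOf_eq, Nat.testBit_zero, decide_eq_true_eq]
  omega

section PCA

variable {α : Type*} {app : α → α → Part α} {γ : ℕ →. α}

/-- The membership relation defining the embedding of a pca into Scott's graph model. -/
inductive MemF (app : α → α → Part α) (γ : ℕ →. α) : α → ℕ → Prop
  | base {b : α} {m : ℕ} : b ∈ γ m → MemF app γ b (marker m)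
  | step {a b c : α} {m y : ℕ} : b ∈ γ m → c ∈ app a b → MemF app γ c y →
      MemF app γ a (Nat.pair y (2 ^ marker m))

theorem MemF.one_le {a : α} {x : ℕ} (h : MemF app γ a x) : 1 ≤ x := by
  cases h with
  | base hb => exact marker_pos _
  | step hb hc hm => exact le_trans Nat.one_le_two_pow (Nat.right_le_pair _ _)

theorem memF_marker_inv {b : α} {m : ℕ} {x : ℕ} (h : MemF app γ b x) (hx : x = marker m) :
    b ∈ γ m := by
  cases h with
  | base hb =>
    cases marker_injective hx
    exact hb
  | step hb hc hm =>
    exfalso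
    have h2 := (Nat.pair_eq_pair.1 (hx.trans rfl)).2
    exact two_pow_ne_odd (marker_pos _) h2

theorem memF_app {a b c : α} (hb : ∃ m, b ∈ γ m) (hc : c ∈ app a b) :
    {x | ∃ u, Nat.pair x u ∈ {z | MemF app γ a z} ∧ Du u ⊆ {z | MemF app γ b z}}
      = {z | MemF app γ c z} := by
  ext x
  simp only [Set.mem_setOf_eq]
  constructor
  · rintro ⟨u, hm, hsub⟩
    generalize hq : Nat.pair x u = q at hm
    cases hm with
    | @base b' m' hb' =>
      exfalso
      obtain ⟨h1, h2⟩ := Nat.pair_eq_pair.1 (hq.trans rfl)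
      have h0 : (0 : ℕ) ∈ Du u := h2 ▸ zero_mem_Du_odd _
      have := (hsub h0).one_le
      omega
    | @step a' b' c' m' y hb' hc' hm' =>
      obtain ⟨h1, h2⟩ := Nat.pair_eq_pair.1 hq
      subst h1 h2
      have hmm : marker m' ∈ Du (2 ^ marker m') := by rw [Du_two_pow]; rfl
      have hbγ : b ∈ γ m' := memF_marker_inv (hsub hmm) rfl
      cases Part.mem_unique hb' hbγ
      cases Part.mem_unique hc' hc
      exact hm'
  · intro hx
    obtain ⟨m, hbm⟩ := hb
    refine ⟨2 ^ marker m, MemF.step hbm hc hx, ?_⟩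
    rw [Du_two_pow]
    exact Set.singleton_subset_iff.2 (MemF.base hbm)

/-! #### Certificates -/

/-- One step of certificate checking. -/
def stepf (u : ℕ) (st : Option (ℕ × ℕ)) (p : ℕ × ℕ) : Option (ℕ × ℕ) :=
  st.bind fun q =>
    bif (q.2.unpair.2 == 2 ^ marker p.1) && u.testBit (tri q.1 p.1 p.2) then
      some (p.2, q.2.unpair.1)
    else none

/-- Final certificate check. -/
def finf (nK u m j : ℕ) (st : Option (ℕ × ℕ)) : Bool :=
  st.casesOn false fun q =>
    (q.2 == marker m) && u.testBit (tri nK m j) && u.testBit (tri nK q.1 j)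

theorem foldl_stepf_none (u : ℕ) : ∀ L : List (ℕ × ℕ), L.foldl (stepf u) none = none
  | [] => rfl
  | p :: L => by
      rw [List.foldl_cons, show stepf u none p = none from rfl]
      exact foldl_stepf_none u L

theorem finf_foldl_mono {u u' : ℕ} (hsub : ∀ t, u.testBit t = true → u'.testBit t = true)
    {nK m j : ℕ} : ∀ (L : List (ℕ × ℕ)) (st : Option (ℕ × ℕ)),
    finf nK u m j (L.foldl (stepf u) st) = true →
      finf nK u' m j (L.foldl (stepf u') st) = true := by
  intro L
  induction L with
  | nil =>
    intro st h
    cases st with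
    | none => simpa [finf] using h
    | some q =>
      simp only [List.foldl_nil, finf, Bool.and_eq_true, beq_iff_eq] at h ⊢
      exact ⟨⟨h.1.1, hsub _ h.1.2⟩, hsub _ h.2⟩
  | cons p L ih =>
    intro st h
    cases st with
    | none =>
      rw [foldl_stepf_none] at h
      simp [finf] at h
    | some q =>
      rw [List.foldl_cons] at h ⊢
      by_cases hcond : ((q.2.unpair.2 == 2 ^ marker p.1) && u.testBit (tri q.1 p.1 p.2)) = true
      · have hcond' : ((q.2.unpair.2 == 2 ^ marker p.1) && u'.testBit (tri q.1 p.1 p.2)) = true := by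
          simp only [Bool.and_eq_true] at hcond ⊢
          exact ⟨hcond.1, hsub _ hcond.2⟩
        rw [show stepf u (some q) p = some (p.2, q.2.unpair.1) by
          simp [stepf, hcond]] at h
        rw [show stepf u' (some q) p = some (p.2, q.2.unpair.1) by
          simp [stepf, hcond']]
        exact ih _ h
      · rw [show stepf u (some q) p = none by
          simp [stepf, Bool.eq_false_iff.2 hcond]] at h
        rw [foldl_stepf_none] at h
        simp [finf] at h

theorem cert_sound {X : Set ℕ} {kc : α} {nK : ℕ}
    (hk : ∀ a b : α, app2 app kc a b = Part.some a) (hKc : kc ∈ γ nK)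
    (hX1 : ∀ n m j : ℕ, tri n m j ∈ X → ∃ a b c : α, a ∈ γ n ∧ b ∈ γ m ∧ c ∈ γ j ∧ c ∈ app a b)
    {u : ℕ} (hu : ∀ t, u.testBit t = true → t ∈ X) :
    ∀ (L : List (ℕ × ℕ)) (m j n x : ℕ) (w : α), w ∈ γ n →
      finf nK u m j (L.foldl (stepf u) (some (n, x))) = true → MemF app γ w x := by
  intro L
  induction L with
  | nil =>
    intro m j n x w hw h
    simp only [List.foldl_nil, finf, Bool.and_eq_true, beq_iff_eq] at h
    obtain ⟨⟨h1, h2⟩, h3⟩ := h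
    obtain ⟨a1, b1, c1, ha1, hb1, hc1, hab1⟩ := hX1 _ _ _ (hu _ h2)
    obtain ⟨a2, b2, c2, ha2, hb2, hc2, hab2⟩ := hX1 _ _ _ (hu _ h3)
    rw [Part.mem_unique ha1 hKc] at hab1
    rw [Part.mem_unique ha2 hKc, Part.mem_unique hb2 hw, Part.mem_unique hc2 hc1] at hab2
    have e1 : app kc b1 = Part.some c1 := Part.eq_some_iff.2 hab1
    have e2 : app kc w = Part.some c1 := Part.eq_some_iff.2 hab2
    have f1 := hk b1 b1
    have f2 := hk w b1
    rw [app2, e1, Part.bind_some] at f1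
    rw [app2, e2, Part.bind_some] at f2
    have hbw : b1 = w := by
      have := f1.symm.trans f2
      simpa [Part.some_inj] using this
    rw [h1]
    exact MemF.base (hbw ▸ hb1)
  | cons p L ih =>
    intro m j n x w hw h
    rw [List.foldl_cons] at h
    by_cases hcond : ((x.unpair.2 == 2 ^ marker p.1) && u.testBit (tri n p.1 p.2)) = true
    · rw [show stepf u (some (n, x)) p = some (p.2, x.unpair.1) by
        simp [stepf, hcond]] at h
      simp only [Bool.and_eq_true, beq_iff_eq] at hcond
      obtain ⟨hx2, hbit⟩ := hcond
      obtain ⟨a1, b1, c1, ha1, hb1, hc1, hab1⟩ := hX1 _ _ _ (hu _ hbit)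
      rw [Part.mem_unique ha1 hw] at hab1
      have hc1m := ih m j p.2 x.unpair.1 c1 hc1 h
      have hst := MemF.step (app := app) hb1 hab1 hc1m
      rwa [← hx2, Nat.pair_unpair] at hst
    · rw [show stepf u (some (n, x)) p = none by
        simp [stepf, Bool.eq_false_iff.2 hcond]] at h
      rw [foldl_stepf_none] at h
      simp [finf] at h

theorem cert_complete {X : Set ℕ} {kc : α} {nK : ℕ}
    (hγ : IsNumbering γ)
    (hk : ∀ a b : α, app2 app kc a b = Part.some a) (hKc : kc ∈ γ nK)
    (hX2 : ∀ (n m j : ℕ) (a b c : α), a ∈ γ n → b ∈ γ m → c ∈ γ j → c ∈ app a b → tri n m j ∈ X)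
    {w : α} {x : ℕ} (hmem : MemF app γ w x) :
    ∀ n : ℕ, w ∈ γ n → ∃ (L : List (ℕ × ℕ)) (m j u : ℕ),
      (∀ t, u.testBit t = true → t ∈ X) ∧
      finf nK u m j (L.foldl (stepf u) (some (n, x))) = true := by
  induction hmem with
  | @base b m hb =>
    intro n hn
    have hbb : b ∈ app2 app kc b b := by
      rw [hk b b]; exact Part.mem_some _
    obtain ⟨kb, hkb, -⟩ := Part.mem_bind_iff.1 hbb
    obtain ⟨j, hj⟩ := hγ kb
    refine ⟨[], m, j, 2 ^ tri nK m j ||| 2 ^ tri nK n j, ?_, ?_⟩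
    · intro t ht
      rw [Nat.testBit_or] at ht
      simp only [Bool.or_eq_true, Nat.testBit_two_pow, decide_eq_true_eq] at ht
      rcases ht with h | h
      · rw [← h]; exact hX2 _ _ _ _ _ _ hKc hb hj hkb
      · rw [← h]; exact hX2 _ _ _ _ _ _ hKc hn hj hkb
    · simp [finf, Nat.testBit_or, Nat.testBit_two_pow]
  | @step a b c m y hb hc hmc ih =>
    intro n hn
    obtain ⟨k', hk'⟩ := hγ c
    obtain ⟨L', m', j', u', hu', hfin'⟩ := ih k' hk'
    refine ⟨(m, k') :: L', m', j', u' ||| 2 ^ tri n m k', ?_, ?_⟩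
    · intro t ht
      rw [Nat.testBit_or] at ht
      rcases Bool.or_eq_true_iff.1 ht with h | h
      · exact hu' t h
      · simp only [Nat.testBit_two_pow, decide_eq_true_eq] at h
        rw [← h]; exact hX2 _ _ _ _ _ _ hn hb hk' hc
    · rw [List.foldl_cons]
      have hstep : stepf (u' ||| 2 ^ tri n m k') (some (n, Nat.pair y (2 ^ marker m))) (m, k')
          = some (k', y) := by
        simp [stepf, Nat.unpair_pair, Nat.testBit_or, Nat.testBit_two_pow]
      rw [hstep]
      exact finf_foldl_mono (fun t ht => by rw [Nat.testBit_or, ht]; rfl) L' (some (k', y)) hfin'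

end PCA

/-! #### Computability of the certificate checker -/

theorem primrec_pow2 : Primrec₂ ((· ^ ·) : ℕ → ℕ → ℕ) :=
  Primrec₂.unpaired'.1 Nat.Primrec.pow

theorem primrec_testBit : Primrec₂ Nat.testBit := by
  have h1 : Primrec fun p : ℕ × ℕ => decide (p.1 / 2 ^ p.2 % 2 = 1) := by
    have hpow : Primrec fun p : ℕ × ℕ => 2 ^ p.2 :=
      primrec_pow2.comp (Primrec.const 2) Primrec.snd
    have hdiv : Primrec fun p : ℕ × ℕ => p.1 / 2 ^ p.2 :=
      Primrec.nat_div.comp Primrec.fst hpow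
    have hmod : Primrec fun p : ℕ × ℕ => p.1 / 2 ^ p.2 % 2 :=
      Primrec.nat_mod.comp hdiv (Primrec.const 2)
    exact (Primrec.eq.comp hmod (Primrec.const 1)).decide
  exact (h1.to₂ : Primrec₂ fun u t : ℕ => decide (u / 2 ^ t % 2 = 1)).of_eq
    fun u t => Nat.testBit_eq_decide_div_mod_eq.symm

theorem primrec_marker : Primrec marker :=
  Primrec₂.natPair.comp (Primrec.const 0)
    (Primrec.succ.comp (primrec_pow2.comp (Primrec.const 2) Primrec.succ))

/-- The full certificate checker. -/
def certOK (na nK : ℕ) (z cL : ℕ) : Bool :=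
  finf nK z.unpair.2 (Denumerable.ofNat (List (ℕ × ℕ) × ℕ × ℕ) cL).2.1
    (Denumerable.ofNat (List (ℕ × ℕ) × ℕ × ℕ) cL).2.2
    (((Denumerable.ofNat (List (ℕ × ℕ) × ℕ × ℕ) cL).1).foldl (stepf z.unpair.2)
      (some (na, z.unpair.1)))

theorem computable_certOK (na nK : ℕ) : Computable₂ (certOK na nK) := by
  have hband : ∀ {β : Type} [Primcodable β] {f g : β → Bool}, Primrec f → Primrec g →
      Primrec fun b => f b && g b := fun hf hg => Primrec.and.comp hf hg
  -- the step function, uncurried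
  have hu : Primrec fun v : (ℕ × ℕ) × Option (ℕ × ℕ) × (ℕ × ℕ) => v.1.1.unpair.2 :=
    Primrec.snd.comp (Primrec.unpair.comp (Primrec.fst.comp Primrec.fst))
  have hp1 : Primrec fun v : (ℕ × ℕ) × Option (ℕ × ℕ) × (ℕ × ℕ) => v.2.2.1 :=
    Primrec.fst.comp (Primrec.snd.comp Primrec.snd)
  have hp2 : Primrec fun v : (ℕ × ℕ) × Option (ℕ × ℕ) × (ℕ × ℕ) => v.2.2.2 :=
    Primrec.snd.comp (Primrec.snd.comp Primrec.snd)
  have hst : Primrec fun v : (ℕ × ℕ) × Option (ℕ × ℕ) × (ℕ × ℕ) => v.2.1 :=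
    Primrec.fst.comp Primrec.snd
  have hinner : Primrec₂ fun (v : (ℕ × ℕ) × Option (ℕ × ℕ) × (ℕ × ℕ)) (q : ℕ × ℕ) =>
      bif (q.2.unpair.2 == 2 ^ marker v.2.2.1) &&
            (v.1.1.unpair.2).testBit (tri q.1 v.2.2.1 v.2.2.2) then
        some (v.2.2.2, q.2.unpair.1)
      else none := by
    have hq1 : Primrec fun w : ((ℕ × ℕ) × Option (ℕ × ℕ) × (ℕ × ℕ)) × (ℕ × ℕ) => w.2.1 :=
      Primrec.fst.comp Primrec.snd
    have hq2u1 : Primrec fun w : ((ℕ × ℕ) × Option (ℕ × ℕ) × (ℕ × ℕ)) × (ℕ × ℕ) =>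
        w.2.2.unpair.1 :=
      Primrec.fst.comp (Primrec.unpair.comp (Primrec.snd.comp Primrec.snd))
    have hq2u2 : Primrec fun w : ((ℕ × ℕ) × Option (ℕ × ℕ) × (ℕ × ℕ)) × (ℕ × ℕ) =>
        w.2.2.unpair.2 :=
      Primrec.snd.comp (Primrec.unpair.comp (Primrec.snd.comp Primrec.snd))
    have hwp1 : Primrec fun w : ((ℕ × ℕ) × Option (ℕ × ℕ) × (ℕ × ℕ)) × (ℕ × ℕ) => w.1.2.2.1 :=
      hp1.comp Primrec.fst
    have hwp2 : Primrec fun w : ((ℕ × ℕ) × Option (ℕ × ℕ) × (ℕ × ℕ)) × (ℕ × ℕ) => w.1.2.2.2 :=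
      hp2.comp Primrec.fst
    have hwu : Primrec fun w : ((ℕ × ℕ) × Option (ℕ × ℕ) × (ℕ × ℕ)) × (ℕ × ℕ) =>
        w.1.1.1.unpair.2 := hu.comp Primrec.fst
    have hc1 : Primrec fun w : ((ℕ × ℕ) × Option (ℕ × ℕ) × (ℕ × ℕ)) × (ℕ × ℕ) =>
        w.2.2.unpair.2 == 2 ^ marker w.1.2.2.1 :=
      Primrec.beq.comp hq2u2 (primrec_pow2.comp (Primrec.const 2) (primrec_marker.comp hwp1))
    have hc2 : Primrec fun w : ((ℕ × ℕ) × Option (ℕ × ℕ) × (ℕ × ℕ)) × (ℕ × ℕ) =>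
        (w.1.1.1.unpair.2).testBit (tri w.2.1 w.1.2.2.1 w.1.2.2.2) :=
      primrec_testBit.comp hwu (Primrec₂.natPair.comp hq1 (Primrec₂.natPair.comp hwp1 hwp2))
    have hsome : Primrec fun w : ((ℕ × ℕ) × Option (ℕ × ℕ) × (ℕ × ℕ)) × (ℕ × ℕ) =>
        (some (w.1.2.2.2, w.2.2.unpair.1) : Option (ℕ × ℕ)) :=
      Primrec.option_some.comp (hwp2.pair hq2u1)
    exact (Primrec.cond (hband hc1 hc2) hsome (Primrec.const none)).to₂
  have hstepP : Primrec₂ fun (a : ℕ × ℕ) (sp : Option (ℕ × ℕ) × (ℕ × ℕ)) =>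
      stepf a.1.unpair.2 sp.1 sp.2 := (Primrec.option_bind hst hinner).to₂
  -- decoding
  have hdec : Primrec fun a : ℕ × ℕ => Denumerable.ofNat (List (ℕ × ℕ) × ℕ × ℕ) a.2 :=
    (Primrec.ofNat _).comp Primrec.snd
  have hL : Primrec fun a : ℕ × ℕ => (Denumerable.ofNat (List (ℕ × ℕ) × ℕ × ℕ) a.2).1 :=
    Primrec.fst.comp hdec
  have hm : Primrec fun a : ℕ × ℕ => (Denumerable.ofNat (List (ℕ × ℕ) × ℕ × ℕ) a.2).2.1 :=
    Primrec.fst.comp (Primrec.snd.comp hdec)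
  have hj : Primrec fun a : ℕ × ℕ => (Denumerable.ofNat (List (ℕ × ℕ) × ℕ × ℕ) a.2).2.2 :=
    Primrec.snd.comp (Primrec.snd.comp hdec)
  have hinit : Primrec fun a : ℕ × ℕ => (some (na, a.1.unpair.1) : Option (ℕ × ℕ)) :=
    Primrec.option_some.comp
      ((Primrec.const na).pair (Primrec.fst.comp (Primrec.unpair.comp Primrec.fst)))
  have hfold : Primrec fun a : ℕ × ℕ =>
      ((Denumerable.ofNat (List (ℕ × ℕ) × ℕ × ℕ) a.2).1).foldl (stepf a.1.unpair.2)
        (some (na, a.1.unpair.1)) :=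
    Primrec.list_foldl hL hinit hstepP
  have hu' : Primrec fun a : ℕ × ℕ => a.1.unpair.2 :=
    Primrec.snd.comp (Primrec.unpair.comp Primrec.fst)
  -- final check
  have hg2 : Primrec₂ fun (a : ℕ × ℕ) (q : ℕ × ℕ) =>
      (q.2 == marker (Denumerable.ofNat (List (ℕ × ℕ) × ℕ × ℕ) a.2).2.1) &&
        (a.1.unpair.2).testBit (tri nK (Denumerable.ofNat (List (ℕ × ℕ) × ℕ × ℕ) a.2).2.1
          (Denumerable.ofNat (List (ℕ × ℕ) × ℕ × ℕ) a.2).2.2) &&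
        (a.1.unpair.2).testBit (tri nK q.1 (Denumerable.ofNat (List (ℕ × ℕ) × ℕ × ℕ) a.2).2.2) := by
    have hq1 : Primrec fun w : (ℕ × ℕ) × (ℕ × ℕ) => w.2.1 := Primrec.fst.comp Primrec.snd
    have hq2 : Primrec fun w : (ℕ × ℕ) × (ℕ × ℕ) => w.2.2 := Primrec.snd.comp Primrec.snd
    have hum : Primrec fun w : (ℕ × ℕ) × (ℕ × ℕ) => w.1.1.unpair.2 := hu'.comp Primrec.fst
    have hmm : Primrec fun w : (ℕ × ℕ) × (ℕ × ℕ) =>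
        (Denumerable.ofNat (List (ℕ × ℕ) × ℕ × ℕ) w.1.2).2.1 := hm.comp Primrec.fst
    have hjj : Primrec fun w : (ℕ × ℕ) × (ℕ × ℕ) =>
        (Denumerable.ofNat (List (ℕ × ℕ) × ℕ × ℕ) w.1.2).2.2 := hj.comp Primrec.fst
    have hb1 : Primrec fun w : (ℕ × ℕ) × (ℕ × ℕ) =>
        w.2.2 == marker (Denumerable.ofNat (List (ℕ × ℕ) × ℕ × ℕ) w.1.2).2.1 :=
      Primrec.beq.comp hq2 (primrec_marker.comp hmm)
    have hb2 : Primrec fun w : (ℕ × ℕ) × (ℕ × ℕ) => (w.1.1.unpair.2).testBit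
        (tri nK (Denumerable.ofNat (List (ℕ × ℕ) × ℕ × ℕ) w.1.2).2.1
          (Denumerable.ofNat (List (ℕ × ℕ) × ℕ × ℕ) w.1.2).2.2) :=
      primrec_testBit.comp hum
        (Primrec₂.natPair.comp (Primrec.const nK) (Primrec₂.natPair.comp hmm hjj))
    have hb3 : Primrec fun w : (ℕ × ℕ) × (ℕ × ℕ) => (w.1.1.unpair.2).testBit
        (tri nK w.2.1 (Denumerable.ofNat (List (ℕ × ℕ) × ℕ × ℕ) w.1.2).2.2) :=
      primrec_testBit.comp hum
        (Primrec₂.natPair.comp (Primrec.const nK) (Primrec₂.natPair.comp hq1 hjj))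
    exact (hband (hband hb1 hb2) hb3).to₂
  have hfin : Primrec fun a : ℕ × ℕ => certOK na nK a.1 a.2 :=
    (Primrec.option_casesOn hfold (Primrec.const false) hg2).of_eq fun a => rfl
  exact Primrec₂.to_comp (hfin.to₂.of_eq fun a b => rfl)


theorem stmt16 (α : Type*) (app : α → α → Part α) (hpca : IsPCA app)
    (γ : ℕ →. α) (hγ : IsNumbering γ) (X : Set ℕ)
    (hX : X = {p | ∃ (n m k : ℕ) (a b c : α),
      a ∈ γ n ∧ b ∈ γ m ∧ c ∈ γ k ∧ c ∈ app a b ∧ p = Nat.pair n (Nat.pair m k)}) :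
    (∃ f : α → Gel X, IsPCAEmbedding app (gXApp X) f) ∧
    (∃ f : α → Set ℕ, IsPCAEmbedding app gApp f) := by
  classical
  obtain ⟨s, kc, hsk, hk, hs, hs3⟩ := hpca
  have hX2 : ∀ (n m j : ℕ) (a b c : α), a ∈ γ n → b ∈ γ m → c ∈ γ j → c ∈ app a b →
      tri n m j ∈ X := by
    intro n m j a b c h1 h2 h3 h4
    rw [hX]
    exact ⟨n, m, j, a, b, c, h1, h2, h3, h4, rfl⟩
  have hX1 : ∀ n m j : ℕ, tri n m j ∈ X →
      ∃ a b c : α, a ∈ γ n ∧ b ∈ γ m ∧ c ∈ γ j ∧ c ∈ app a b := by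
    intro n m j ht
    rw [hX] at ht
    obtain ⟨n', m', j', a, b, c, h1, h2, h3, h4, he⟩ := ht
    obtain ⟨e1, e23⟩ := Nat.pair_eq_pair.1 he
    obtain ⟨e2, e3⟩ := Nat.pair_eq_pair.1 e23
    subst e1; subst e2; subst e3
    exact ⟨a, b, c, h1, h2, h3, h4⟩
  obtain ⟨nK, hnK⟩ := hγ kc
  set F : α → Set ℕ := fun a => {z | MemF app γ a z} with hF
  have hFapp : ∀ a b c : α, c ∈ app a b →
      {x | ∃ u, Nat.pair x u ∈ F a ∧ Du u ⊆ F b} = F c := fun a b c hc =>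
    memF_app (hγ b) hc
  have hinj : Function.Injective F := by
    intro a a' h
    obtain ⟨na, hna⟩ := hγ a
    have h1 : marker na ∈ F a := MemF.base hna
    rw [h] at h1
    exact Part.mem_unique hna (memF_marker_inv h1 rfl)
  have henum : ∀ a : α, EnumLE (F a) X := by
    intro a
    obtain ⟨na, hna⟩ := hγ a
    refine ⟨{z | ∃ cL, certOK na nK z cL = true}, ce1in_exists (computable_certOK na nK), ?_⟩
    intro x
    constructor
    · intro hx
      obtain ⟨L, m, j, u, hu, hfin⟩ := cert_complete hγ hk hnK hX2 hx na hna
      refine ⟨u, ⟨Encodable.encode ((L, m, j) : List (ℕ × ℕ) × ℕ × ℕ), ?_⟩, ?_⟩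
      · simpa [certOK, Denumerable.ofNat_encode, Nat.unpair_pair] using hfin
      · intro t ht
        exact hu t ht
    · rintro ⟨u, ⟨cL, hcert⟩, hDu⟩
      have hu : ∀ t, u.testBit t = true → t ∈ X := fun t ht => hDu ht
      simp only [certOK, Nat.unpair_pair] at hcert
      exact cert_sound hk hnK hX1 hu _ _ _ na x a hna hcert
  constructor
  · refine ⟨fun a => ⟨F a, henum a⟩, ?_, ?_⟩
    · intro a a' h
      exact hinj (congrArg Subtype.val h)
    · intro a a' c hc
      have hset := hFapp a a' c hc
      have hgApp : gApp (F a) (F a') = Part.some (F c) := congrArg Part.some hset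
      show (⟨F c, henum c⟩ : Gel X) ∈
        (gApp (F a) (F a')).bind fun C => Part.assert (EnumLE C X) fun h => Part.some ⟨C, h⟩
      rw [hgApp, Part.bind_some]
      exact Part.mem_assert_iff.2 ⟨henum c, Part.mem_some_iff.2 rfl⟩
  · refine ⟨F, hinj, ?_⟩
    intro a a' c hc
    exact Part.mem_some_iff.2 (hFapp a a' c hc).symm


end PCAEmb
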